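/- Let C be a closed symmetric monoidal additive category with ℤ-indexed products and coproducts, with graded objects equipped with Day convolution. If a graded object M has only finitely many nonzero components, each of which is dualizable in C, then M is dualizable in graded objects, with dual N given by N_n = (M_{-n})^∨. -/

import Mathlib

/-!
The dual is built degreewise: the evaluation `Nₚ ⊗ M_q ⟶ 𝟙` is `ε` on the summands with
`p + q = 0`, and the coevaluation `𝟙 ⟶ (M ⊗ N)₀` is the sum of the `η` of the components of `M`
over a finite set containing its support. In each triangle identity only one term of this sum
survives, and it reduces to the corresponding triangle identity in `C`.

Summing needs whiskering to be additive, which follows from the graded hypotheses. Let `P` be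
`A` in degree `0`, `B` in degree `1` and `⊥` elsewhere, and `U` the constant graded object `𝟙`.
As tensoring preserves initial objects, `(U ⊗ P)₀` is a binary coproduct of `𝟙 ⊗ A` and `𝟙 ⊗ B`,
and the `HasGoodTensor` hypotheses say that `X ⊗ -` and `- ⊗ Y` preserve it.
-/

open CategoryTheory Limits MonoidalCategory CategoryTheory.GradedObject

noncomputable section

namespace CategoryTheory.Limits

variable {C : Type*} [Category C] [HasZeroMorphisms C]

def isColimitBinaryCofanOfIsZero {J : Type*} {X : J → C} {c : Cofan X} (hc : IsColimit c)
    {j₀ j₁ : J} (h : j₀ ≠ j₁) (hX : ∀ j, j ≠ j₀ → j ≠ j₁ → IsZero (X j)) :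
    IsColimit (BinaryCofan.mk (c.inj j₀) (c.inj j₁)) := by
  classical
  refine BinaryCofan.isColimitMk
    (fun s => Cofan.IsColimit.desc hc fun j =>
      if h₀ : j = j₀ then eqToHom (by rw [h₀]; rfl) ≫ s.inl
      else if h₁ : j = j₁ then eqToHom (by rw [h₁]; rfl) ≫ s.inr else 0)
    (fun s => by simp [Cofan.IsColimit.fac]; exact Category.id_comp _)
    (fun s => by simp [Cofan.IsColimit.fac, h.symm]; exact Category.id_comp _)
    (fun s m h₀ h₁ => Cofan.IsColimit.hom_ext hc _ _ fun j => ?_)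
  rw [Cofan.IsColimit.fac]
  by_cases hj₀ : j = j₀
  · subst hj₀; simp only [dite_true]; exact h₀.trans (Category.id_comp _).symm
  · by_cases hj₁ : j = j₁
    · subst hj₁; simp only [hj₀, dite_true, dite_false]; exact h₁.trans (Category.id_comp _).symm
    · simpa [hj₀, hj₁] using (hX j hj₀ hj₁).eq_of_src _ _

end CategoryTheory.Limits

namespace CategoryTheory.GradedObject

section

variable {C : Type*} [Category C] [HasInitial C]

def pairGraded (A B : C) : GradedObject ℤ C :=
  fun q => if q = 0 then A else if q = 1 then B else ⊥_ C

@[simp] lemma pairGraded_zero (A B : C) : pairGraded A B 0 = A := rfl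

@[simp] lemma pairGraded_one (A B : C) : pairGraded A B 1 = B := rfl

lemma isZero_pairGraded [HasZeroMorphisms C] (A B : C) {q : ℤ} (h₀ : q ≠ 0) (h₁ : q ≠ 1) :
    IsZero (pairGraded A B q) := by
  simpa [pairGraded, h₀, h₁] using initialIsInitial.isZero

lemma snd_ne_of_mem_antidiagonal_zero {x : (fun p : ℤ × ℤ => p.1 + p.2) ⁻¹' {0}}
    (h₀ : x ≠ ⟨(0, 0), rfl⟩) (h₁ : x ≠ ⟨(-1, 1), by simp⟩) : x.1.2 ≠ 0 ∧ x.1.2 ≠ 1 := by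
  obtain ⟨⟨a, b⟩, hab⟩ := x
  have hab : a + b = 0 := hab
  constructor <;> rintro rfl
  · exact h₀ (Subtype.ext (Prod.ext (by simpa using hab) rfl))
  · exact h₁ (Subtype.ext (Prod.ext (by dsimp; omega) rfl))

end

section

variable {C : Type*} [Category C] [Preadditive C] [MonoidalCategory C] [HasInitial C]
  (A B : C) [HasTensor (fun _ : ℤ => 𝟙_ C) (pairGraded A B)]

def isColimitMapBinaryCofanUnitTensorPairGraded (F : C ⥤ C)
    [PreservesColimit (Functor.empty.{0} C) F]
    [PreservesColimit (Functor.empty.{0} C) ((curriedTensor C).obj (𝟙_ C))]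
    [PreservesColimit (Discrete.functor ((((mapBifunctor (curriedTensor C) ℤ ℤ).obj
      (fun _ : ℤ => 𝟙_ C)).obj (pairGraded A B)).mapObjFun (fun ⟨i, j⟩ => i + j) 0)) F] :
    IsColimit (BinaryCofan.mk
      (F.map (Monoidal.ιTensorObj (fun _ : ℤ => 𝟙_ C) (pairGraded A B) 0 0 0 rfl))
      (F.map (Monoidal.ιTensorObj (fun _ : ℤ => 𝟙_ C) (pairGraded A B) (-1) 1 0 (by simp)))) :=
  isColimitBinaryCofanOfIsZero
    (Cofan.isColimitMapCoconeEquiv F _ _ (isColimitOfPreserves F (isColimitCofanMapObj _ _ 0)))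
    (by simp [Subtype.ext_iff]) fun x h₀ h₁ => by
      obtain ⟨hb₀, hb₁⟩ := snd_ne_of_mem_antidiagonal_zero h₀ h₁
      have hZ : IsZero (𝟙_ C ⊗ pairGraded A B x.1.2) :=
        (IsInitial.isInitialObj ((curriedTensor C).obj (𝟙_ C)) _
          (isZero_pairGraded A B hb₀ hb₁).isInitial).isZero
      exact (IsInitial.isInitialObj F _ hZ.isInitial).isZero

end

section

variable {C : Type*} [Category C] [Preadditive C] [MonoidalCategory C] [HasInitial C]
  [∀ X₁ X₂ : GradedObject ℤ C, HasTensor X₁ X₂]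
  [PreservesColimit (Functor.empty.{0} C) ((curriedTensor C).obj (𝟙_ C))]

lemma hasBinaryCoproducts_of_hasTensor : HasBinaryCoproducts C := by
  refine @hasBinaryCoproducts_of_hasColimit_pair _ _ fun {A B} => ?_
  have : HasColimit (pair (𝟙_ C ⊗ A) (𝟙_ C ⊗ B)) :=
    ⟨_, (isColimitMapBinaryCofanUnitTensorPairGraded A B (𝟭 C))⟩
  exact hasColimit_of_iso (mapPairIso (F := pair A B) (G := pair (𝟙_ C ⊗ A) (𝟙_ C ⊗ B))
    (λ_ A).symm (λ_ B).symm)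

lemma additive_of_preservesColimit_unit_tensor_pairGraded (F : C ⥤ C)
    [PreservesColimit (Functor.empty.{0} C) F]
    [∀ A B : C, PreservesColimit (Discrete.functor ((((mapBifunctor (curriedTensor C) ℤ ℤ).obj
      (fun _ : ℤ => 𝟙_ C)).obj (pairGraded A B)).mapObjFun (fun ⟨i, j⟩ => i + j) 0)) F] :
    F.Additive := by
  have := (initialIsInitial (C := C)).isZero.hasZeroObject
  have := hasBinaryCoproducts_of_hasTensor (C := C)
  have := HasBinaryBiproducts.of_hasBinaryCoproducts (C := C)
  have : PreservesColimitsOfShape (Discrete WalkingPair) F := ⟨fun {K} => by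
    let A := K.obj ⟨.left⟩
    let B := K.obj ⟨.right⟩
    have : PreservesColimit (pair (𝟙_ C ⊗ A) (𝟙_ C ⊗ B)) F :=
      preservesColimit_of_preserves_colimit_cocone
      (isColimitMapBinaryCofanUnitTensorPairGraded A B (𝟭 C))
      ((isColimitMapCoconeBinaryCofanEquiv F _ _).symm
        (isColimitMapBinaryCofanUnitTensorPairGraded A B F))
    have : PreservesColimit (pair A B) F := preservesColimit_of_iso_diagram F
      (mapPairIso (F := pair (𝟙_ C ⊗ A) (𝟙_ C ⊗ B)) (λ_ A) (λ_ B))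
    exact preservesColimit_of_iso_diagram F (diagramIsoPair K).symm⟩
  have := preservesBinaryBiproducts_of_preservesBinaryCoproducts F
  exact Functor.additive_of_preservesBinaryBiproducts F

end

theorem monoidalPreadditive_of_hasGoodTensor {C : Type*} [Category C] [Preadditive C]
    [MonoidalCategory C] [HasInitial C]
    [∀ X₁ X₂ : GradedObject ℤ C, HasTensor X₁ X₂]
    [∀ X₁ X₂ X₃ : GradedObject ℤ C, HasGoodTensor₁₂Tensor X₁ X₂ X₃]
    [∀ X₁ X₂ X₃ : GradedObject ℤ C, HasGoodTensorTensor₂₃ X₁ X₂ X₃]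
    [∀ X₁, PreservesColimit (Functor.empty.{0} C) ((curriedTensor C).obj X₁)]
    [∀ X₂, PreservesColimit (Functor.empty.{0} C) ((curriedTensor C).flip.obj X₂)] :
    MonoidalPreadditive C := by
  have hL (X : C) : ((curriedTensor C).obj X).Additive :=
    have (A B : C) := ‹∀ X₁ X₂ X₃ : GradedObject ℤ C, HasGoodTensorTensor₂₃ X₁ X₂ X₃›
      (fun _ => X) (fun _ => 𝟙_ C) (pairGraded A B) 0 0
    additive_of_preservesColimit_unit_tensor_pairGraded _
  have hR (Y : C) : ((curriedTensor C).flip.obj Y).Additive :=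
    have (A B : C) := ‹∀ X₁ X₂ X₃ : GradedObject ℤ C, HasGoodTensor₁₂Tensor X₁ X₂ X₃›
      (fun _ => 𝟙_ C) (pairGraded A B) (fun _ => Y) 0 0
    additive_of_preservesColimit_unit_tensor_pairGraded _
  exact
    { whiskerLeft_zero := ((curriedTensor C).obj _).map_zero _ _
      zero_whiskerRight := ((curriedTensor C).flip.obj _).map_zero _ _
      whiskerLeft_add _ _ := ((curriedTensor C).obj _).map_add
      add_whiskerRight _ _ := ((curriedTensor C).flip.obj _).map_add }

end CategoryTheory.GradedObject

namespace CategoryTheory.MonoidalPreadditive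

variable {C : Type*} [Category C] [Preadditive C] [MonoidalCategory C] [MonoidalPreadditive C]

lemma isZero_tensorObj_of_isZero_left {X : C} (Y : C) (hX : IsZero X) : IsZero (X ⊗ Y) :=
  (tensorRight Y).map_isZero hX

lemma isZero_tensorObj_of_isZero_right (X : C) {Y : C} (hY : IsZero Y) : IsZero (X ⊗ Y) :=
  (tensorLeft X).map_isZero hY

lemma isZero_rightDual {X : C} [HasRightDual X] (hX : IsZero X) : IsZero Xᘁ := by
  have hη : η_ X Xᘁ = 0 := (isZero_tensorObj_of_isZero_left _ hX).eq_of_tgt _ _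
  have h := ExactPairing.coevaluation_evaluation X Xᘁ
  rw [hη, whiskerLeft_zero, Limits.zero_comp] at h
  rw [IsZero.iff_id_eq_zero]
  simpa using (ρ_ Xᘁ).inv ≫= h.symm =≫ (λ_ Xᘁ).hom

end CategoryTheory.MonoidalPreadditive

namespace CategoryTheory.GradedObject.Monoidal

variable {I : Type*} [AddMonoid I] {C : Type*} [Category C] [MonoidalCategory C]

lemma ι_associator_inv_tensorHom_id {X₁ X₂ X₃ Y : GradedObject I C} [HasTensor X₁ X₂]
    [HasTensor X₂ X₃] [HasTensor (tensorObj X₁ X₂) X₃] [HasTensor X₁ (tensorObj X₂ X₃)]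
    [HasTensor Y X₃] [HasGoodTensor₁₂Tensor X₁ X₂ X₃] [HasGoodTensorTensor₂₃ X₁ X₂ X₃]
    (f : tensorObj X₁ X₂ ⟶ Y) {i₁ i₂ i₃ i₁₂ i₂₃ j : I} (h₁₂ : i₁ + i₂ = i₁₂)
    (h₂₃ : i₂ + i₃ = i₂₃) (h : i₁ + i₂₃ = j) :
    X₁ i₁ ◁ ιTensorObj X₂ X₃ i₂ i₃ i₂₃ h₂₃ ≫ ιTensorObj X₁ (tensorObj X₂ X₃) i₁ i₂₃ j h ≫
        (associator X₁ X₂ X₃).inv j ≫ tensorHom f (𝟙 X₃) j =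
      (α_ _ _ _).inv ≫ (ιTensorObj X₁ X₂ i₁ i₂ i₁₂ h₁₂ ≫ f i₁₂) ▷ X₃ i₃ ≫
        ιTensorObj Y X₃ i₁₂ i₃ j (by rw [← h, ← h₂₃, ← h₁₂, add_assoc]) := by
  have h₁₂₃ : i₁ + i₂ + i₃ = j := by rw [← h, ← h₂₃, add_assoc]
  rw [← ιTensorObj₃_eq_assoc _ _ _ _ _ _ _ h₁₂₃, ιTensorObj₃_associator_inv_assoc,
    ιTensorObj₃'_eq_assoc _ _ _ _ _ _ _ h₁₂₃ _ h₁₂, ι_tensorHom]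
  simp

lemma ι_associator_hom_id_tensorHom {X₁ X₂ X₃ Y : GradedObject I C} [HasTensor X₁ X₂]
    [HasTensor X₂ X₃] [HasTensor (tensorObj X₁ X₂) X₃] [HasTensor X₁ (tensorObj X₂ X₃)]
    [HasTensor X₁ Y] [HasGoodTensor₁₂Tensor X₁ X₂ X₃] [HasGoodTensorTensor₂₃ X₁ X₂ X₃]
    (f : tensorObj X₂ X₃ ⟶ Y) {i₁ i₂ i₃ i₁₂ i₂₃ j : I} (h₁₂ : i₁ + i₂ = i₁₂)
    (h₂₃ : i₂ + i₃ = i₂₃) (h : i₁₂ + i₃ = j) :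
    ιTensorObj X₁ X₂ i₁ i₂ i₁₂ h₁₂ ▷ X₃ i₃ ≫ ιTensorObj (tensorObj X₁ X₂) X₃ i₁₂ i₃ j h ≫
        (associator X₁ X₂ X₃).hom j ≫ tensorHom (𝟙 X₁) f j =
      (α_ _ _ _).hom ≫ X₁ i₁ ◁ (ιTensorObj X₂ X₃ i₂ i₃ i₂₃ h₂₃ ≫ f i₂₃) ≫
        ιTensorObj X₁ Y i₁ i₂₃ j (by rw [← h, ← h₂₃, ← h₁₂, add_assoc]) := by
  have h₁₂₃ : i₁ + i₂ + i₃ = j := by rw [← h, ← h₁₂]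
  rw [← ιTensorObj₃'_eq_assoc _ _ _ _ _ _ _ h₁₂₃, ιTensorObj₃'_associator_hom_assoc,
    ιTensorObj₃_eq_assoc _ _ _ _ _ _ _ h₁₂₃ _ h₂₃, ι_tensorHom]
  simp

variable [DecidableEq I] [HasInitial C]

lemma ι_rightUnitor_hom
    [∀ X₁, PreservesColimit (Functor.empty.{0} C) ((curriedTensor C).obj X₁)]
    (X : GradedObject I C) (i : I) (h : i + 0 = i) :
    ιTensorObj X tensorUnit i 0 i h ≫ (rightUnitor X).hom i =
      X i ◁ tensorUnit₀.hom ≫ (ρ_ (X i)).hom := by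
  have hι : ιTensorObj X tensorUnit i 0 i h =
      (X i ◁ tensorUnit₀.hom ≫ (ρ_ (X i)).hom) ≫ (rightUnitor X).inv i := by
    simp [rightUnitor_inv_apply, ← whiskerLeft_comp_assoc]
  rw [hι, Category.assoc, ← categoryOfGradedObjects_comp, Iso.inv_hom_id,
    categoryOfGradedObjects_id, Category.comp_id]

lemma ι_leftUnitor_hom
    [∀ X₂, PreservesColimit (Functor.empty.{0} C) ((curriedTensor C).flip.obj X₂)]
    (X : GradedObject I C) (i : I) (h : 0 + i = i) :
    ιTensorObj tensorUnit X 0 i i h ≫ (leftUnitor X).hom i =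
      tensorUnit₀.hom ▷ X i ≫ (λ_ (X i)).hom := by
  have hι : ιTensorObj tensorUnit X 0 i i h =
      (tensorUnit₀.hom ▷ X i ≫ (λ_ (X i)).hom) ≫ (leftUnitor X).inv i := by
    simp [leftUnitor_inv_apply, ← comp_whiskerRight_assoc]
  rw [hι, Category.assoc, ← categoryOfGradedObjects_comp, Iso.inv_hom_id,
    categoryOfGradedObjects_id, Category.comp_id]

end CategoryTheory.GradedObject.Monoidal

namespace CategoryTheory.GradedObject

section

variable {C : Type*} [Category C] [Preadditive C] [MonoidalCategory C] [HasInitial C]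
  (M : GradedObject ℤ C) [∀ n, HasRightDual (M n)]

abbrev dual : GradedObject ℤ C := fun n => (M (-n))ᘁ

def coevaluation [HasTensor M (dual M)] (S : Finset ℤ) :
    Monoidal.tensorUnit ⟶ Monoidal.tensorObj M (dual M) := fun n =>
  if h : n = 0 then by
    subst h
    exact Monoidal.tensorUnit₀.hom ≫
      ∑ k ∈ S, η_ (M (-k)) (M (-k))ᘁ ≫ Monoidal.ιTensorObj M (dual M) (-k) k 0 (neg_add_cancel k)
  else 0

lemma coevaluation_zero [HasTensor M (dual M)] (S : Finset ℤ) :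
    coevaluation M S 0 = Monoidal.tensorUnit₀.hom ≫
      ∑ k ∈ S, η_ (M (-k)) (M (-k))ᘁ ≫ Monoidal.ιTensorObj M (dual M) (-k) k 0 (neg_add_cancel k) :=
  rfl

variable [HasTensor (dual M) M]

def evaluation : Monoidal.tensorObj (dual M) M ⟶ Monoidal.tensorUnit := fun n =>
  if h : n = 0 then by
    subst h
    exact Monoidal.tensorObjDesc fun p q hpq =>
      (M (-p))ᘁ ◁ eqToHom (congrArg M (neg_eq_of_add_eq_zero_right hpq).symm) ≫
        ε_ (M (-p)) (M (-p))ᘁ ≫ Monoidal.tensorUnit₀.inv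
  else 0

lemma ι_evaluation_zero (p : ℤ) :
    Monoidal.ιTensorObj (dual M) M p (-p) 0 (add_neg_cancel p) ≫ evaluation M 0 =
      ε_ (M (-p)) (M (-p))ᘁ ≫ Monoidal.tensorUnit₀.inv := by
  simp [evaluation]

lemma ι_evaluation_of_ne_zero (p q : ℤ) {n : ℤ} (h : p + q = n) (hn : n ≠ 0) :
    Monoidal.ιTensorObj (dual M) M p q n h ≫ evaluation M n = 0 := by
  simp [evaluation, hn]

end

section

open MonoidalPreadditive

variable {C : Type*} [Category C] [Preadditive C] [MonoidalCategory C] [MonoidalPreadditive C]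
  [HasInitial C] [∀ X₁ X₂ : GradedObject ℤ C, HasTensor X₁ X₂]
  [∀ X₁ X₂ X₃ : GradedObject ℤ C, HasGoodTensor₁₂Tensor X₁ X₂ X₃]
  [∀ X₁ X₂ X₃ : GradedObject ℤ C, HasGoodTensorTensor₂₃ X₁ X₂ X₃]
  [∀ X₁, PreservesColimit (Functor.empty.{0} C) ((curriedTensor C).obj X₁)]
  [∀ X₂, PreservesColimit (Functor.empty.{0} C) ((curriedTensor C).flip.obj X₂)]
  (M : GradedObject ℤ C) [∀ n, HasRightDual (M n)] {S : Finset ℤ}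

lemma dual_coevaluation_evaluation (hS : ∀ k ∉ S, IsZero (M (-k))) :
    Monoidal.tensorHom (𝟙 (dual M)) (coevaluation M S) ≫ (Monoidal.associator _ _ _).inv ≫
      Monoidal.tensorHom (evaluation M) (𝟙 (dual M)) =
    (Monoidal.rightUnitor (dual M)).hom ≫ (Monoidal.leftUnitor (dual M)).inv := by
  funext j
  refine Monoidal.tensorObj_ext _ _ fun p q hpq => ?_
  by_cases hp : p ∈ S ∧ q = 0
  swap
  · have : IsZero (dual M p ⊗ Monoidal.tensorUnit q) := by
      by_cases hq : q = 0
      · subst hq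
        exact isZero_tensorObj_of_isZero_left _ (isZero_rightDual (hS p (by tauto)))
      · exact isZero_tensorObj_of_isZero_right _ (Monoidal.isInitialTensorUnitApply q hq).isZero
    exact this.eq_of_src _ _
  obtain ⟨hp, rfl⟩ := hp
  obtain rfl : p = j := by simpa using hpq
  simp only [categoryOfGradedObjects_comp, Monoidal.ι_tensorHom_assoc, coevaluation_zero,
    categoryOfGradedObjects_id, id_tensorHom, whiskerLeft_comp, whiskerLeft_sum,
    Preadditive.sum_comp, Preadditive.comp_sum, Category.assoc]
  rw [Finset.sum_eq_single_of_mem p hp]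
  · rw [Monoidal.ι_associator_inv_tensorHom_id (evaluation M) (add_neg_cancel p)
      (neg_add_cancel p), ι_evaluation_zero, comp_whiskerRight]
    conv_rhs => rw [← Category.assoc, Monoidal.ι_rightUnitor_hom, Monoidal.leftUnitor_inv_apply]
    slice_lhs 2 4 => rw [ExactPairing.coevaluation_evaluation]
    simp
  · intro k _ hk
    rw [Monoidal.ι_associator_inv_tensorHom_id (evaluation M) rfl (neg_add_cancel k),
      ι_evaluation_of_ne_zero M _ _ _ (show p + -k ≠ 0 by omega)]
    simp

lemma dual_evaluation_coevaluation (hS : ∀ k ∉ S, IsZero (M (-k))) :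
    Monoidal.tensorHom (coevaluation M S) (𝟙 M) ≫ (Monoidal.associator _ _ _).hom ≫
      Monoidal.tensorHom (𝟙 M) (evaluation M) =
    (Monoidal.leftUnitor M).hom ≫ (Monoidal.rightUnitor M).inv := by
  funext j
  refine Monoidal.tensorObj_ext _ _ fun q p hpq => ?_
  by_cases hp : -p ∈ S ∧ q = 0
  swap
  · have : IsZero (Monoidal.tensorUnit q ⊗ M p) := by
      by_cases hq : q = 0
      · subst hq
        exact isZero_tensorObj_of_isZero_right _ (by simpa using hS (-p) (by tauto))
      · exact isZero_tensorObj_of_isZero_left _ (Monoidal.isInitialTensorUnitApply q hq).isZero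
    exact this.eq_of_src _ _
  obtain ⟨hp, rfl⟩ := hp
  obtain rfl : p = j := by simpa using hpq
  obtain ⟨k, rfl⟩ : ∃ k, p = -k := ⟨-p, (neg_neg p).symm⟩
  rw [neg_neg] at hp
  simp only [categoryOfGradedObjects_comp, Monoidal.ι_tensorHom_assoc, coevaluation_zero,
    categoryOfGradedObjects_id, tensorHom_id, comp_whiskerRight, sum_whiskerRight,
    Preadditive.sum_comp, Preadditive.comp_sum, Category.assoc]
  rw [Finset.sum_eq_single_of_mem k hp]
  · rw [Monoidal.ι_associator_hom_id_tensorHom (evaluation M) (neg_add_cancel k)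
      (add_neg_cancel k), ι_evaluation_zero, whiskerLeft_comp]
    conv_rhs => rw [← Category.assoc, Monoidal.ι_leftUnitor_hom, Monoidal.rightUnitor_inv_apply]
    slice_lhs 2 4 => rw [ExactPairing.evaluation_coevaluation]
    simp
  · intro l _ hl
    rw [Monoidal.ι_associator_hom_id_tensorHom (evaluation M) (neg_add_cancel l) rfl,
      ι_evaluation_of_ne_zero M _ _ _ (show l + -k ≠ 0 by omega)]
    simp

abbrev exactPairingDual [∀ X₁ X₂ X₃ X₄ : GradedObject ℤ C, HasTensor₄ObjExt X₁ X₂ X₃ X₄]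
    (hS : ∀ k ∉ S, IsZero (M (-k))) : ExactPairing M (dual M) where
  coevaluation' := coevaluation M S
  evaluation' := evaluation M
  coevaluation_evaluation' := dual_coevaluation_evaluation M hS
  evaluation_coevaluation' := dual_evaluation_coevaluation M hS

end

end CategoryTheory.GradedObject

end

/-- let `C` be a (closed symmetric) monoidal additive category with
`ℤ`-indexed products and coproducts, and equip `ℤ`-graded objects with the Day
convolution monoidal structure `(X ⊗ Y)ₙ = ⨁_{p+q=n} Xₚ ⊗ Y_q`.  If a graded object
`M` has only finitely many nonzero components, each of which is dualizable in `C`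
(witnessed by a choice of right duals), then `M` is dualizable in graded objects,
with dual `N` given by `Nₙ = (M₋ₙ)ᘁ` (i.e. there is an exact pairing between `M` and
`N`). -/
theorem gradedObject_dualizable_of_finite_support
    {C : Type*} [Category C] [Preadditive C] [MonoidalCategory C]
    [HasZeroObject C]
    [∀ (X₁ X₂ : GradedObject ℤ C), HasTensor X₁ X₂]
    [∀ (X₁ X₂ X₃ : GradedObject ℤ C), HasGoodTensor₁₂Tensor X₁ X₂ X₃]
    [∀ (X₁ X₂ X₃ : GradedObject ℤ C), HasGoodTensorTensor₂₃ X₁ X₂ X₃]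
    [HasInitial C]
    [∀ X₁, PreservesColimit (Functor.empty.{0} C) ((curriedTensor C).obj X₁)]
    [∀ X₂, PreservesColimit (Functor.empty.{0} C) ((curriedTensor C).flip.obj X₂)]
    [∀ (X₁ X₂ X₃ X₄ : GradedObject ℤ C), HasTensor₄ObjExt X₁ X₂ X₃ X₄]
    (M : GradedObject ℤ C)
    (hfin : {n : ℤ | ¬ IsZero (M n)}.Finite)
    [∀ n : ℤ, HasRightDual (M n)] :
    ∃ N : GradedObject ℤ C,
      (∀ n : ℤ, Nonempty (N n ≅ (M (-n))ᘁ)) ∧ Nonempty (ExactPairing M N) := by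
  have := monoidalPreadditive_of_hasGoodTensor (C := C)
  have hS : ∀ k ∉ hfin.toFinset.image (- ·), IsZero (M (-k)) := fun k hk => by
    by_contra h
    exact hk (Finset.mem_image.2 ⟨-k, hfin.mem_toFinset.2 h, neg_neg k⟩)
  exact ⟨dual M, fun n => ⟨Iso.refl _⟩, ⟨exactPairingDual M hS⟩⟩
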